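/- Let G = P_s □ P_t be a grid graph with s ≥ t ≥ 2 and s ≥ 3, and let k be an integer with s < k ≤ s + t − 2; write k = s + α with α ≥ 1. Then the set S = (U × {v_1, v_t}) ∪ ({u_1, u_s} × {v_2, ..., v_{α+1}}), where U = {u_1, ..., u_s}, has size 2k and is a k-resolving set for G. -/

import Mathlib

/-!
The grid distance is the taxicab distance `|i - g| + |j - h|`. Call `A = U × {v₁, v_t}` the two
boundary rows and `B = {u₁, u_s} × {v₂, …, v_{α+1}}` the sides. Let `u = (a, b) ≠ w = (c, e)`.
If `b = e`, a vertex of a row is equidistant from `u` and `w` only in the column `(a + c) / 2`, so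
at least `2s - 2 ≥ k` vertices of `A` resolve `u, w`. If `a = c`, every vertex of `A` resolves
them. Otherwise, in every column one of its two ends in `A` resolves them, since equality at both
would force `b - e = e - b`; likewise, for each `v_j` with `2 ≤ j ≤ α + 1`, one of `(u₁, v_j)`,
`(u_s, v_j)` does, which gives `s + α = k` resolving vertices.
-/

/-- A finset `S` of vertices is a `k`-resolving set for `G`: any two distinct vertices `u, w`
have different distances to at least `k` vertices of `S`. -/
def IsKResolvingSet {V : Type*} [DecidableEq V] (G : SimpleGraph V) (k : ℕ) (S : Finset V) : Prop :=
  ∀ u w : V, u ≠ w → k ≤ (S.filter (fun v => G.dist u v ≠ G.dist w v)).card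

open Finset

namespace SimpleGraph

variable {V W : Type*} {G : SimpleGraph V} {H : SimpleGraph W}

lemma dist_boxProd (hG : G.Preconnected) (hH : H.Preconnected) (x y : V × W) :
    (G □ H).dist x y = G.dist x.1 y.1 + H.dist x.2 y.2 := by
  rw [dist, edist_boxProd, ENat.toNat_add (edist_ne_top_iff_reachable.mpr (hG _ _))
    (edist_ne_top_iff_reachable.mpr (hH _ _))]
  rfl

lemma Walk.natAbs_sub_le_length {f : V → ℤ} (hf : ∀ x y, G.Adj x y → |f x - f y| ≤ 1)
    {u v : V} (p : G.Walk u v) : (f u - f v).natAbs ≤ p.length := by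
  induction p with
  | nil => simp
  | cons h p ih =>
    have := abs_le.mp (hf _ _ h)
    rw [length_cons]
    omega

lemma pathGraph_dist_le_of_val_eq_add {n : ℕ} (d : ℕ) (i j : Fin n) (hij : (j : ℕ) = i + d) :
    (pathGraph n).dist i j ≤ d := by
  induction d generalizing j with
  | zero => simp [Fin.ext (by omega : (i : ℕ) = j)]
  | succ d ih =>
    let j' : Fin n := ⟨i + d, by omega⟩
    have hadj : (pathGraph n).Adj j' j := pathGraph_adj.mpr (Or.inl (by simp [j']; omega))
    calc (pathGraph n).dist i j ≤ (pathGraph n).dist i j' + (pathGraph n).dist j' j :=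
          (pathGraph_preconnected n i j').dist_triangle_left j
      _ ≤ d + 1 := add_le_add (ih j' rfl) (by simpa using dist_le hadj.toWalk)

lemma pathGraph_dist {n : ℕ} (i j : Fin n) :
    (pathGraph n).dist i j = ((i : ℤ) - j).natAbs := by
  refine le_antisymm ?_ ?_
  · rcases le_total (i : ℕ) j with h | h
    · have := pathGraph_dist_le_of_val_eq_add (j - i) i j (by omega)
      omega
    · have := pathGraph_dist_le_of_val_eq_add (i - j) j i (by omega)
      rw [dist_comm] at this
      omega
  · obtain ⟨p, hp⟩ := (pathGraph_preconnected n i j).exists_walk_length_eq_dist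
    rw [← hp]
    refine p.natAbs_sub_le_length (f := fun x : Fin n ↦ (x : ℤ)) fun x y h ↦ ?_
    rw [pathGraph_adj] at h
    rw [abs_le]
    omega

end SimpleGraph

open SimpleGraph

abbrev grid (s t : ℕ) : SimpleGraph (Fin s × Fin t) := pathGraph s □ pathGraph t

lemma grid_dist {s t : ℕ} (x y : Fin s × Fin t) :
    (grid s t).dist x y = ((x.1 : ℤ) - y.1).natAbs + ((x.2 : ℤ) - y.2).natAbs := by
  rw [dist_boxProd (pathGraph_preconnected s) (pathGraph_preconnected t), pathGraph_dist,
    pathGraph_dist]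

section Resolving

variable {s t : ℕ} {u w : Fin s × Fin t}

lemma grid_dist_ne_of_fst_eq (h₁ : u.1 = w.1) (h₂ : u.2 ≠ w.2) {v : Fin s × Fin t}
    (hv : (v.2 : ℕ) = 0 ∨ (v.2 : ℕ) = t - 1) : (grid s t).dist u v ≠ (grid s t).dist w v := by
  have := v.2.isLt
  rw [grid_dist, grid_dist, h₁]
  rw [Ne, Fin.ext_iff] at h₂
  omega

lemma grid_eq_of_dist_eq_of_snd_eq (hne : u ≠ w) (h₂ : u.2 = w.2) {v v' : Fin s × Fin t}
    (hv : (grid s t).dist u v = (grid s t).dist w v)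
    (hv' : (grid s t).dist u v' = (grid s t).dist w v') (hvv' : v.2 = v'.2) : v = v' := by
  have h₁ : (u.1 : ℕ) ≠ w.1 := fun h ↦ hne (Prod.ext (Fin.ext h) h₂)
  rw [grid_dist, grid_dist, h₂] at hv hv'
  ext
  · omega
  · rw [hvv']

lemma grid_dist_ne_or_dist_ne_of_snd_ne (h₂ : u.2 ≠ w.2) (i : Fin s) {j₀ j₁ : Fin t}
    (hj₀ : (j₀ : ℕ) = 0) (hj₁ : (j₁ : ℕ) = t - 1) :
    (grid s t).dist u (i, j₀) ≠ (grid s t).dist w (i, j₀) ∨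
      (grid s t).dist u (i, j₁) ≠ (grid s t).dist w (i, j₁) := by
  have := u.2.isLt
  have := w.2.isLt
  rw [grid_dist, grid_dist, grid_dist, grid_dist]
  rw [Ne, Fin.ext_iff] at h₂
  dsimp only
  omega

lemma grid_dist_ne_or_dist_ne_of_fst_ne (h₁ : u.1 ≠ w.1) (j : Fin t) {i₀ i₁ : Fin s}
    (hi₀ : (i₀ : ℕ) = 0) (hi₁ : (i₁ : ℕ) = s - 1) :
    (grid s t).dist u (i₀, j) ≠ (grid s t).dist w (i₀, j) ∨
      (grid s t).dist u (i₁, j) ≠ (grid s t).dist w (i₁, j) := by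
  have := u.1.isLt
  have := w.1.isLt
  rw [grid_dist, grid_dist, grid_dist, grid_dist]
  rw [Ne, Fin.ext_iff] at h₁
  dsimp only
  omega

lemma card_rows_le_card_filter_add_of_snd_eq (hne : u ≠ w) (h₂ : u.2 = w.2)
    (R : Finset (Fin t)) :
    #((univ : Finset (Fin s)) ×ˢ R) ≤
      #((univ ×ˢ R).filter fun v ↦ (grid s t).dist u v ≠ (grid s t).dist w v) + #R := by
  rw [← card_filter_add_card_filter_not (s := univ ×ˢ R)
    (fun v ↦ (grid s t).dist u v ≠ (grid s t).dist w v)]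
  refine add_le_add_right (card_le_card_of_injOn Prod.snd (fun v hv ↦ ?_) fun v hv v' hv' ↦ ?_) _
  · exact (mem_product.mp (mem_filter.mp hv).1).2
  · simp only [mem_coe, mem_filter, not_not] at hv hv'
    exact grid_eq_of_dist_eq_of_snd_eq hne h₂ hv.2 hv'.2

lemma filter_rows_eq_self_of_fst_eq (h₁ : u.1 = w.1) (h₂ : u.2 ≠ w.2) {j₀ j₁ : Fin t}
    (hj₀ : (j₀ : ℕ) = 0) (hj₁ : (j₁ : ℕ) = t - 1) :
    (univ ×ˢ {j₀, j₁}).filter (fun v ↦ (grid s t).dist u v ≠ (grid s t).dist w v) =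
      univ ×ˢ {j₀, j₁} := by
  refine filter_true_of_mem fun v hv ↦ grid_dist_ne_of_fst_eq h₁ h₂ ?_
  simp only [mem_product, mem_insert, mem_singleton] at hv
  rcases hv.2 with h | h <;> simp [h, hj₀, hj₁]

lemma card_le_card_filter_rows_of_snd_ne (h₂ : u.2 ≠ w.2) {j₀ j₁ : Fin t}
    (hj₀ : (j₀ : ℕ) = 0) (hj₁ : (j₁ : ℕ) = t - 1) :
    s ≤ #((univ ×ˢ {j₀, j₁}).filter fun v ↦ (grid s t).dist u v ≠ (grid s t).dist w v) := by
  calc s = #(univ : Finset (Fin s)) := (card_fin s).symm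
    _ ≤ _ := card_le_card_of_surjOn Prod.fst fun i _ ↦ by
      rcases grid_dist_ne_or_dist_ne_of_snd_ne h₂ i hj₀ hj₁ with h | h
      · exact ⟨(i, j₀), by simp [h], rfl⟩
      · exact ⟨(i, j₁), by simp [h], rfl⟩

lemma card_le_card_filter_sides_of_fst_ne (h₁ : u.1 ≠ w.1) {i₀ i₁ : Fin s}
    (hi₀ : (i₀ : ℕ) = 0) (hi₁ : (i₁ : ℕ) = s - 1) (J : Finset (Fin t)) :
    #J ≤ #(({i₀, i₁} ×ˢ J).filter fun v ↦ (grid s t).dist u v ≠ (grid s t).dist w v) := by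
  refine card_le_card_of_surjOn Prod.snd fun j hj ↦ ?_
  rcases grid_dist_ne_or_dist_ne_of_fst_ne h₁ j hi₀ hi₁ with h | h
  · exact ⟨(i₀, j), by simp_all, rfl⟩
  · exact ⟨(i₁, j), by simp_all, rfl⟩

end Resolving

lemma card_filter_fin_le_and_le {n a b : ℕ} (hb : b < n) :
    #{j : Fin n | a ≤ (j : ℕ) ∧ (j : ℕ) ≤ b} = b + 1 - a := by
  rw [← card_map Fin.valEmbedding, map_filter', Fin.map_valEmbedding_univ, ← Nat.card_Icc]
  congr 1
  ext x
  simp only [mem_filter, mem_Iio, mem_Icc, Fin.valEmbedding_apply]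
  constructor
  · rintro ⟨-, ⟨y, hy, rfl⟩⟩
    exact hy
  · intro h
    exact ⟨by omega, ⟨x, by omega⟩, h, rfl⟩

lemma card_univ_product_pair_union_pair_product {α β : Type*} [Fintype α] [DecidableEq α]
    [DecidableEq β] {a₀ a₁ : α} {b₀ b₁ : β} (ha : a₀ ≠ a₁) (hb : b₀ ≠ b₁) {J : Finset β}
    (hJ : Disjoint {b₀, b₁} J) :
    #(univ ×ˢ {b₀, b₁} ∪ {a₀, a₁} ×ˢ J) = 2 * Fintype.card α + 2 * #J := by
  rw [card_union_of_disjoint (disjoint_product.mpr (Or.inr hJ)), card_product, card_product,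
    card_pair ha, card_pair hb, card_univ, mul_comm]

theorem isKResolvingSet_grid_rows_union_sides {s t k : ℕ} {i₀ i₁ : Fin s} {j₀ j₁ : Fin t}
    (hi₀ : (i₀ : ℕ) = 0) (hi₁ : (i₁ : ℕ) = s - 1) (hj₀ : (j₀ : ℕ) = 0) (hj₁ : (j₁ : ℕ) = t - 1)
    (hj : j₀ ≠ j₁) {J : Finset (Fin t)} (hJ : Disjoint {j₀, j₁} J) (hk₁ : k + 2 ≤ 2 * s)
    (hk₂ : k ≤ s + #J) :
    IsKResolvingSet (grid s t) k (univ ×ˢ {j₀, j₁} ∪ {i₀, i₁} ×ˢ J) := by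
  intro u w hne
  rw [filter_union,
    card_union_of_disjoint (disjoint_filter_filter (disjoint_product.mpr (Or.inr hJ)))]
  have hrows : #((univ : Finset (Fin s)) ×ˢ {j₀, j₁}) = 2 * s := by
    rw [card_product, card_pair hj, card_univ, Fintype.card_fin, mul_comm]
  rcases eq_or_ne u.2 w.2 with h₂ | h₂
  · have := card_rows_le_card_filter_add_of_snd_eq hne h₂ {j₀, j₁}
    rw [card_pair hj] at this
    omega
  rcases eq_or_ne u.1 w.1 with h₁ | h₁
  · rw [filter_rows_eq_self_of_fst_eq h₁ h₂ hj₀ hj₁]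
    omega
  · have := card_le_card_filter_rows_of_snd_ne h₂ (s := s) hj₀ hj₁
    have := card_le_card_filter_sides_of_fst_ne h₁ hi₀ hi₁ J
    omega

/-- In the grid graph `P_s □ P_t` with `s ≥ t ≥ 2` and `s ≥ 3`, for `k = s + α` with `α ≥ 1`
and `k ≤ s + t - 2`, the set `S = (U × {v₁, v_t}) ∪ ({u₁, u_s} × {v₂, …, v_{α+1}})` has
size `2k` and is a `k`-resolving set. -/
theorem grid_kResolvingSet_case_k_gt_s (s t : ℕ) (ht : 2 ≤ t) (hts : t ≤ s)
    (k α : ℕ) (hk : k = s + α) (hk2 : k ≤ s + t - 2) :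
    let S : Finset (Fin s × Fin t) :=
      (Finset.univ ×ˢ ({⟨0, by omega⟩, ⟨t - 1, by omega⟩} : Finset (Fin t))) ∪
        (({⟨0, by omega⟩, ⟨s - 1, by omega⟩} : Finset (Fin s)) ×ˢ
          (Finset.univ.filter (fun j : Fin t => 1 ≤ (j : ℕ) ∧ (j : ℕ) ≤ α)))
    S.card = 2 * k ∧
      IsKResolvingSet ((SimpleGraph.pathGraph s).boxProd (SimpleGraph.pathGraph t)) k S := by
  intro S
  have hJ : #(univ.filter fun j : Fin t ↦ 1 ≤ (j : ℕ) ∧ (j : ℕ) ≤ α) = α := by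
    rw [card_filter_fin_le_and_le (by omega)]
    omega
  have hdisj : Disjoint ({⟨0, by omega⟩, ⟨t - 1, by omega⟩} : Finset (Fin t))
      (univ.filter fun j : Fin t ↦ 1 ≤ (j : ℕ) ∧ (j : ℕ) ≤ α) := by
    simp only [disjoint_insert_left, disjoint_singleton_left, mem_filter, mem_univ, true_and]
    omega
  have hi : (⟨0, by omega⟩ : Fin s) ≠ ⟨s - 1, by omega⟩ := by rw [Ne, Fin.mk.injEq]; omega
  have hj : (⟨0, by omega⟩ : Fin t) ≠ ⟨t - 1, by omega⟩ := by rw [Ne, Fin.mk.injEq]; omega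
  refine ⟨?_, isKResolvingSet_grid_rows_union_sides rfl rfl rfl rfl hj hdisj (by omega)
    (by omega)⟩
  rw [card_univ_product_pair_union_pair_product hi hj hdisj, hJ, Fintype.card_fin, hk]
  ring
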